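/- arXiv:2012.12345 — 3 statements merged into one kernel-verified Lean document; each statement's English description precedes it below -/
import Mathlib

section
/- Let f(x) = (α + γN)·log(x/S0) + β(1-ρ)(N - R0 - x) - T0β with S0 > 0, N > 0, α ≥ 0, γ > 0, β > 0, 0 ≤ ρ < 1, R0, T0 ≥ 0. If f attains a strictly positive maximum value at x0 = (α+γN)/(β(1-ρ)), then the equation f(x) = 0 has exactly two solutions x1, x2 with 0 < x1 < x0 < x2. -/
/-!
For `x > 0`, `f x = A log x - B x - c` with `A = α + γN > 0` and `B = β(1 - ρ) > 0`. Its derivative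
`A / x - B` changes sign exactly at `x0 = A / B`, so `f` increases strictly on `(0, x0]` and
decreases strictly on `[x0, ∞)`, while `f → -∞` both as `x → 0⁺` and as `x → ∞` (`log x = o(x)`).
As `f x0 > 0`, the intermediate value theorem gives a zero on each side of `x0`, and strict
monotonicity makes each of them unique.
-/

open Set

open Filter Topology

section Unimodal

variable {h : ℝ → ℝ} {a b c : ℝ}

theorem exists_mem_Ioo_eq_of_tendsto_nhdsGT_atBot (hab : a < b) (hcont : ContinuousOn h (Ioc a b))
    (hbot : Tendsto h (𝓝[>] a) atBot) (hc : c < h b) : ∃ x ∈ Ioo a b, h x = c := by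
  obtain ⟨y, hyc, hay, hyb⟩ := ((hbot.eventually_lt_atBot c).and (Ioo_mem_nhdsGT hab)).exists
  obtain ⟨x, ⟨hyx, hxb⟩, hx⟩ :=
    intermediate_value_Ioo hyb.le (hcont.mono (Icc_subset_Ioc hay le_rfl)) ⟨hyc, hc⟩
  exact ⟨x, ⟨hay.trans hyx, hxb⟩, hx⟩

theorem exists_mem_Ioi_eq_of_tendsto_atTop_atBot (hcont : ContinuousOn h (Ici b))
    (htop : Tendsto h atTop atBot) (hc : c < h b) : ∃ x ∈ Ioi b, h x = c := by
  obtain ⟨y, hby, hyc⟩ := ((eventually_gt_atTop b).and (htop.eventually_lt_atBot c)).exists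
  obtain ⟨x, ⟨hbx, -⟩, hx⟩ :=
    intermediate_value_Ioo' hby.le (hcont.mono Icc_subset_Ici_self) ⟨hyc, hc⟩
  exact ⟨x, hbx, hx⟩

theorem exists_eq_pair_of_strictMonoOn_of_strictAntiOn (hab : a < b)
    (hcont : ContinuousOn h (Ioi a)) (hmono : StrictMonoOn h (Ioc a b))
    (hanti : StrictAntiOn h (Ici b)) (hbot : Tendsto h (𝓝[>] a) atBot)
    (htop : Tendsto h atTop atBot) (hc : c < h b) :
    ∃ x₁ x₂, a < x₁ ∧ x₁ < b ∧ b < x₂ ∧ h x₁ = c ∧ h x₂ = c ∧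
      ∀ x, a < x → h x = c → x = x₁ ∨ x = x₂ := by
  obtain ⟨x₁, ⟨hax₁, hx₁b⟩, hx₁⟩ :=
    exists_mem_Ioo_eq_of_tendsto_nhdsGT_atBot hab (hcont.mono Ioc_subset_Ioi_self) hbot hc
  obtain ⟨x₂, hbx₂, hx₂⟩ :=
    exists_mem_Ioi_eq_of_tendsto_atTop_atBot (hcont.mono (Ici_subset_Ioi.2 hab)) htop hc
  refine ⟨x₁, x₂, hax₁, hx₁b, hbx₂, hx₁, hx₂, fun x hax hx => ?_⟩
  rcases le_or_gt x b with hxb | hbx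
  · exact .inl (hmono.injOn ⟨hax, hxb⟩ ⟨hax₁, hx₁b.le⟩ (hx.trans hx₁.symm))
  · exact .inr (hanti.injOn hbx.le (mem_Ici.2 (le_of_lt hbx₂)) (hx.trans hx₂.symm))

end Unimodal

section LogSubLinear

variable {A B : ℝ}

theorem continuousOn_log_sub_linear : ContinuousOn (fun x => A * Real.log x - B * x) (Ioi 0) :=
  fun x hx => by
    have := Real.continuousAt_log (ne_of_gt hx)
    fun_prop (disch := assumption)

theorem hasDerivAt_log_sub_linear {x : ℝ} (hx : x ≠ 0) :
    HasDerivAt (fun x => A * Real.log x - B * x) (A / x - B) x := by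
  have h := ((Real.hasDerivAt_log hx).const_mul A).sub ((hasDerivAt_id' x).const_mul B)
  rwa [mul_one, ← div_eq_mul_inv] at h

theorem strictMonoOn_log_sub_linear (hB : 0 < B) :
    StrictMonoOn (fun x => A * Real.log x - B * x) (Ioc 0 (A / B)) := by
  refine strictMonoOn_of_hasDerivWithinAt_pos (convex_Ioc 0 _)
    (continuousOn_log_sub_linear.mono Ioc_subset_Ioi_self)
    (fun x hx => (hasDerivAt_log_sub_linear (interior_subset hx).1.ne').hasDerivWithinAt)
    fun x hx => ?_
  obtain ⟨hx0, hxAB⟩ : x ∈ Ioo 0 (A / B) := by rwa [interior_Ioc] at hx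
  rw [lt_div_iff₀ hB] at hxAB
  rw [sub_pos, lt_div_iff₀ hx0]
  linarith

theorem strictAntiOn_log_sub_linear (hA : 0 < A) (hB : 0 < B) :
    StrictAntiOn (fun x => A * Real.log x - B * x) (Ici (A / B)) := by
  have hpos : Ici (A / B) ⊆ Ioi 0 := Ici_subset_Ioi.2 (by positivity)
  refine strictAntiOn_of_hasDerivWithinAt_neg (convex_Ici _)
    (continuousOn_log_sub_linear.mono hpos)
    (fun x hx => (hasDerivAt_log_sub_linear (hpos (interior_subset hx)).ne').hasDerivWithinAt)
    fun x hx => ?_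
  rw [interior_Ici] at hx
  have hx0 : 0 < x := hpos (mem_Ici.2 hx.out.le)
  rw [sub_neg, div_lt_iff₀ hx0]
  rw [mem_Ioi, div_lt_iff₀ hB] at hx
  linarith

theorem tendsto_log_sub_linear_nhdsGT_zero (hA : 0 < A) :
    Tendsto (fun x => A * Real.log x - B * x) (𝓝[>] 0) atBot := by
  have hlin : Tendsto (fun x => -(B * x)) (𝓝[>] 0) (𝓝 (-(B * 0))) :=
    (Continuous.tendsto (by fun_prop) 0).mono_left nhdsWithin_le_nhds
  simpa [sub_eq_add_neg] using (Real.tendsto_log_nhdsGT_zero.const_mul_atBot hA).atBot_add hlin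

theorem tendsto_log_sub_linear_atTop (hB : 0 < B) :
    Tendsto (fun x => A * Real.log x - B * x) atTop atBot := by
  have hratio : Tendsto (fun x => A * (Real.log x / x) - B) atTop (𝓝 (A * 0 - B)) :=
    (Real.isLittleO_log_id_atTop.tendsto_div_nhds_zero.const_mul A).sub_const B
  refine (tendsto_id.atTop_mul_neg (by linarith) hratio).congr' ?_
  filter_upwards [eventually_gt_atTop 0] with x hx
  simp only [id]
  field_simp

end LogSubLinear

theorem final_size_function_two_roots_general
    (S0 N R0 T0 α γ β ρ : ℝ)
    (hS0 : 0 < S0) (hN : 0 < N)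
    (hα : 0 ≤ α) (hγ : 0 < γ) (hβ : 0 < β) (hρ1 : ρ < 1)
    (f : ℝ → ℝ)
    (hf : ∀ x, f x = (α + γ * N) * Real.log (x / S0) + β * (1 - ρ) * (N - R0 - x) - T0 * β)
    (x0 : ℝ) (hx0 : x0 = (α + γ * N) / (β * (1 - ρ)))
    (hpos : 0 < f x0) :
    ∃ x1 x2 : ℝ, 0 < x1 ∧ x1 < x0 ∧ x0 < x2 ∧ f x1 = 0 ∧ f x2 = 0 ∧
      ∀ x, 0 < x → f x = 0 → x = x1 ∨ x = x2 := by
  set A := α + γ * N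
  set B := β * (1 - ρ)
  have hA : 0 < A := by positivity
  have hB : 0 < B := mul_pos hβ (sub_pos.2 hρ1)
  set c := A * Real.log S0 - B * (N - R0) + T0 * β
  have hf_eq : ∀ x, 0 < x → f x = A * Real.log x - B * x - c := fun x hx => by
    rw [hf, Real.log_div hx.ne' hS0.ne']
    ring
  have hroot : ∀ x, 0 < x → (f x = 0 ↔ A * Real.log x - B * x = c) := fun x hx => by
    rw [hf_eq x hx, sub_eq_zero]
  have hx0_pos : 0 < x0 := hx0 ▸ div_pos hA hB
  subst hx0
  obtain ⟨x1, x2, hx1, hx1x0, hx0x2, hfx1, hfx2, huniq⟩ :=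
    exists_eq_pair_of_strictMonoOn_of_strictAntiOn hx0_pos continuousOn_log_sub_linear
      (strictMonoOn_log_sub_linear hB) (strictAntiOn_log_sub_linear hA hB)
      (tendsto_log_sub_linear_nhdsGT_zero hA) (tendsto_log_sub_linear_atTop hB)
      (c := c) (by linarith [hf_eq _ hx0_pos])
  have hx2 : 0 < x2 := hx0_pos.trans hx0x2
  exact ⟨x1, x2, hx1, hx1x0, hx0x2, (hroot x1 hx1).2 hfx1, (hroot x2 hx2).2 hfx2,
    fun x hx hfx => huniq x hx ((hroot x hx).1 hfx)⟩

theorem final_size_function_two_roots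
    (S0 N R0 T0 α γ β ρ : ℝ)
    (hS0 : 0 < S0) (hN : 0 < N) (hR0 : 0 ≤ R0) (hT0 : 0 ≤ T0)
    (hα : 0 ≤ α) (hγ : 0 < γ) (hβ : 0 < β) (hρ0 : 0 ≤ ρ) (hρ1 : ρ < 1)
    (f : ℝ → ℝ)
    (hf : ∀ x, f x = (α + γ * N) * Real.log (x / S0) + β * (1 - ρ) * (N - R0 - x) - T0 * β)
    (x0 : ℝ) (hx0 : x0 = (α + γ * N) / (β * (1 - ρ)))
    (hmax : ∀ x, 0 < x → f x ≤ f x0) (hpos : 0 < f x0) :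
    ∃ x1 x2 : ℝ, 0 < x1 ∧ x1 < x0 ∧ x0 < x2 ∧ f x1 = 0 ∧ f x2 = 0 ∧
      ∀ x, 0 < x → f x = 0 → x = x1 ∨ x = x2 :=
  final_size_function_two_roots_general S0 N R0 T0 α γ β ρ hS0 hN hα hγ hβ hρ1 f hf x0 hx0 hpos
end

section
/- Let g^α(x) = (α + γN)·log(x/S0) + β(1-ρ)(N-R0-x) - T0β for parameters S0 > 0, N, β, γ > 0, 0 ≤ ρ < 1, R0, T0 ≥ 0. Suppose for each α ≥ 0 that g^α has a unique zero x1(α) in the interval (0, x0(α)) where x0(α) = (α+γN)/(β(1-ρ)), that g^α is strictly increasing on (0, x0(α)), and that x1(α) < S0. If α1 > α2 ≥ 0, then x1(α1) > x1(α2). -/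
/-!
Raising α adds `(α₁ - α₂) · log (x / S0)` to `g`, which is negative on `(0, S0)`, so
`g^{α₁} < g^{α₂}` at both roots. The two intervals `(0, x0 α)` are nested, so one of the
strictly increasing functions `g^{α₁}`, `g^{α₂}` is defined at both roots, and comparing its
values there orders the roots.
-/

open Set

theorem lt_of_strictMonoOn_of_lt {α β : Type*} [LinearOrder α] [Preorder β]
    {f₁ f₂ : α → β} {s₁ s₂ : Set α} (hs : s₁ ⊆ s₂ ∨ s₂ ⊆ s₁)
    (h₁ : StrictMonoOn f₁ s₁) (h₂ : StrictMonoOn f₂ s₂) {u₁ u₂ : α}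
    (hu₁ : u₁ ∈ s₁) (hu₂ : u₂ ∈ s₂) (hf : f₁ u₁ = f₂ u₂)
    (hlt₁ : f₁ u₁ < f₂ u₁) (hlt₂ : f₁ u₂ < f₂ u₂) : u₂ < u₁ := by
  rcases hs with hs | hs
  · exact (h₂.lt_iff_lt hu₂ (hs hu₁)).1 (hf ▸ hlt₁)
  · exact (h₁.lt_iff_lt (hs hu₂) hu₁).1 (hf ▸ hlt₂)

theorem Ioo_subset_Ioo_or_subset {α : Type*} [LinearOrder α] (a b c : α) :
    Ioo a b ⊆ Ioo a c ∨ Ioo a c ⊆ Ioo a b :=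
  (le_total b c).imp (Ioo_subset_Ioo_right ·) (Ioo_subset_Ioo_right ·)

theorem Real.log_div_neg {x S : ℝ} (hx : 0 < x) (h : x < S) : Real.log (x / S) < 0 :=
  Real.log_neg (div_pos hx (hx.trans h)) ((div_lt_one (hx.trans h)).2 h)

theorem add_mul_log_div_lt_of_lt {S c a₁ a₂ r x : ℝ} (ha : a₂ < a₁) (hx : 0 < x) (h : x < S) :
    (a₁ + c) * Real.log (x / S) + r < (a₂ + c) * Real.log (x / S) + r := by
  have hsplit : (a₁ + c) * Real.log (x / S) = (a₂ + c) * Real.log (x / S)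
      + (a₁ - a₂) * Real.log (x / S) := by ring
  have hneg := mul_neg_of_pos_of_neg (sub_pos.2 ha) (Real.log_div_neg hx h)
  linarith

theorem root_monotone_in_alpha_general
    (S0 N β γ ρ R0 T0 : ℝ)
    (g : ℝ → ℝ → ℝ)
    (hg : ∀ α x, g α x = (α + γ * N) * Real.log (x / S0) + β * (1 - ρ) * (N - R0 - x) - T0 * β)
    (x0 : ℝ → ℝ)
    (x1 : ℝ → ℝ)
    (hroot : ∀ α ≥ (0:ℝ), x1 α ∈ Ioo 0 (x0 α) ∧ g α (x1 α) = 0 ∧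
      (∀ x ∈ Ioo 0 (x0 α), g α x = 0 → x = x1 α))
    (hmono : ∀ α ≥ (0:ℝ), StrictMonoOn (g α) (Ioo 0 (x0 α)))
    (hlt : ∀ α ≥ (0:ℝ), x1 α < S0)
    (α1 α2 : ℝ) (hα2 : 0 ≤ α2) (hα : α1 > α2) :
    x1 α1 > x1 α2 := by
  have hα1 : 0 ≤ α1 := hα2.trans hα.le
  obtain ⟨hmem₁, hzero₁, -⟩ := hroot α1 hα1
  obtain ⟨hmem₂, hzero₂, -⟩ := hroot α2 hα2
  have hg_lt : ∀ x ∈ Ioo 0 S0, g α1 x < g α2 x := fun x hx => by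
    simp only [hg, sub_eq_add_neg _ (T0 * β), add_assoc]
    exact add_mul_log_div_lt_of_lt hα hx.1 hx.2
  exact lt_of_strictMonoOn_of_lt (Ioo_subset_Ioo_or_subset 0 _ _) (hmono α1 hα1)
    (hmono α2 hα2) hmem₁ hmem₂ (hzero₁.trans hzero₂.symm)
    (hg_lt _ ⟨hmem₁.1, hlt α1 hα1⟩) (hg_lt _ ⟨hmem₂.1, hlt α2 hα2⟩)

theorem root_monotone_in_alpha
    (S0 N β γ ρ R0 T0 : ℝ)
    (hS0 : 0 < S0) (hN : 0 < N) (hβ : 0 < β) (hγ : 0 < γ)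
    (hρ0 : 0 ≤ ρ) (hρ1 : ρ < 1) (hR0 : 0 ≤ R0) (hT0 : 0 ≤ T0)
    (g : ℝ → ℝ → ℝ)
    (hg : ∀ α x, g α x = (α + γ * N) * Real.log (x / S0) + β * (1 - ρ) * (N - R0 - x) - T0 * β)
    (x0 : ℝ → ℝ) (hx0 : ∀ α, x0 α = (α + γ * N) / (β * (1 - ρ)))
    (x1 : ℝ → ℝ)
    (hroot : ∀ α ≥ (0:ℝ), x1 α ∈ Ioo 0 (x0 α) ∧ g α (x1 α) = 0 ∧
      (∀ x ∈ Ioo 0 (x0 α), g α x = 0 → x = x1 α))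
    (hmono : ∀ α ≥ (0:ℝ), StrictMonoOn (g α) (Ioo 0 (x0 α)))
    (hlt : ∀ α ≥ (0:ℝ), x1 α < S0)
    (α1 α2 : ℝ) (hα2 : 0 ≤ α2) (hα : α1 > α2) :
    x1 α1 > x1 α2 :=
  root_monotone_in_alpha_general S0 N β γ ρ R0 T0 g hg x0 x1 hroot hmono hlt α1 α2 hα2 hα
end

section
/- Let R₀ = (1/γ)(β(1-ρ) - α/N) with σ, γ, β, N > 0, α ≥ 0, 0 ≤ ρ < 1, and let a₂ = σ + 2γ + α/N, a₁ = (σ+γ)(α/N + γ) + σγ, a₀ = σγ(α/N + γ - β(1-ρ)). Then all roots of λ³ + a₂λ² + a₁λ + a₀ have negative real part if and only if R₀ < 1. -/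
/-!
Routh–Hurwitz for a real monic cubic `z³ + a₂ z² + a₁ z + a₀` with `a₂ > 0` and `a₂ a₁ > a₀`:
if `a₀ ≤ 0` the cubic has a real root in `[0, ∞)` by the intermediate value theorem; if
`a₀ > 0` it has a real root `r < 0`, and the complementary quadratic factor
`z² + (r + a₂) z + (r² + a₂ r + a₁)` has positive coefficients, because
`r (r² + a₂ r + a₁) = -a₀` and `(r + a₂)(r² + a₁) = a₂ a₁ - a₀`. For the SEIR coefficients,
`a₂ a₁ - a₀` is a sum of nonnegative terms and `a₀ = σ γ² (1 - R₀)`.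
-/

open Filter Polynomial

theorem tendsto_cubic_atTop (b c d : ℝ) :
    Tendsto (fun x : ℝ => x ^ 3 + b * x ^ 2 + c * x + d) atTop atTop :=
  (tendsto_atTop_of_leadingCoeff_nonneg (C 1 * X ^ 3 + C b * X ^ 2 + C c * X + C d)
    (by rw [degree_cubic one_ne_zero]; norm_num)
    (by rw [leadingCoeff_cubic one_ne_zero]; norm_num)).congr fun x => by simp

theorem exists_nonneg_cubic_root {b c d : ℝ} (hd : d ≤ 0) :
    ∃ r : ℝ, 0 ≤ r ∧ r ^ 3 + b * r ^ 2 + c * r + d = 0 :=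
  intermediate_value_Ici (a := 0) (by fun_prop) (tendsto_cubic_atTop b c d)
    (by simpa using hd)

theorem exists_neg_cubic_root {a₂ a₁ a₀ : ℝ} (ha₀ : 0 < a₀) :
    ∃ r : ℝ, r < 0 ∧ r ^ 3 + a₂ * r ^ 2 + a₁ * r + a₀ = 0 := by
  obtain ⟨x, hx, hroot⟩ := exists_nonneg_cubic_root (b := -a₂) (c := a₁) (neg_nonpos.mpr ha₀.le)
  have hx0 : 0 < x := hx.lt_of_ne (by rintro rfl; linarith)
  exact ⟨-x, neg_neg_of_pos hx0, by linear_combination -hroot⟩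

theorem Complex.re_neg_of_quadratic_eq_zero {b c : ℝ} (hb : 0 < b) (hc : 0 < c) {z : ℂ}
    (hz : z ^ 2 + b * z + c = 0) : z.re < 0 := by
  have hre := congrArg re hz
  have him := congrArg im hz
  simp only [pow_two, add_re, add_im, mul_re, mul_im, ofReal_re, ofReal_im, zero_mul, sub_zero,
    add_zero, zero_re, zero_im] at hre him
  have : z.im * (2 * z.re + b) = 0 := by linear_combination him
  rcases mul_eq_zero.mp this with h | h
  · rw [h] at hre; nlinarith
  · linarith

theorem cubic_eq_mul_quadratic {R : Type*} [CommRing R] {a₂ a₁ a₀ r : R}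
    (hr : r ^ 3 + a₂ * r ^ 2 + a₁ * r + a₀ = 0) (z : R) :
    z ^ 3 + a₂ * z ^ 2 + a₁ * z + a₀ =
      (z - r) * (z ^ 2 + (r + a₂) * z + (r ^ 2 + a₂ * r + a₁)) := by
  linear_combination hr

theorem cubic_roots_re_neg {a₂ a₁ a₀ : ℝ} (ha₂ : 0 < a₂) (ha₀ : 0 < a₀) (hurwitz : a₀ < a₂ * a₁)
    {z : ℂ} (hz : z ^ 3 + a₂ * z ^ 2 + a₁ * z + a₀ = 0) : z.re < 0 := by
  obtain ⟨r, hr, hroot⟩ := exists_neg_cubic_root (a₂ := a₂) (a₁ := a₁) ha₀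
  have ha₁ : 0 < a₁ := pos_of_mul_pos_right (ha₀.trans hurwitz) ha₂.le
  have hc : 0 < r ^ 2 + a₂ * r + a₁ :=
    pos_of_mul_neg_right (a := r) (by linear_combination hroot + ha₀) hr.le
  have hb : 0 < r + a₂ := by
    have : (r + a₂) * (a₁ + r ^ 2) = a₂ * a₁ - a₀ := by linear_combination hroot
    exact pos_of_mul_pos_left (this ▸ sub_pos.mpr hurwitz) (by positivity)
  have hrootℂ : (r : ℂ) ^ 3 + a₂ * (r : ℂ) ^ 2 + a₁ * r + a₀ = 0 := by
    exact_mod_cast congrArg ((↑) : ℝ → ℂ) hroot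
  rw [cubic_eq_mul_quadratic hrootℂ] at hz
  rcases mul_eq_zero.mp hz with h | h
  · simpa [sub_eq_zero.mp h] using hr
  · exact Complex.re_neg_of_quadratic_eq_zero hb hc (by push_cast; exact h)

theorem pos_of_cubic_roots_re_neg {a₂ a₁ a₀ : ℝ}
    (h : ∀ z : ℂ, z ^ 3 + a₂ * z ^ 2 + a₁ * z + a₀ = 0 → z.re < 0) : 0 < a₀ := by
  by_contra! ha₀
  obtain ⟨r, hr, hroot⟩ := exists_nonneg_cubic_root (b := a₂) (c := a₁) ha₀
  have := h r (by exact_mod_cast congrArg ((↑) : ℝ → ℂ) hroot)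
  simp only [Complex.ofReal_re] at this
  linarith

theorem cubic_roots_re_neg_iff {a₂ a₁ a₀ : ℝ} (ha₂ : 0 < a₂) (hurwitz : a₀ < a₂ * a₁) :
    (∀ z : ℂ, z ^ 3 + a₂ * z ^ 2 + a₁ * z + a₀ = 0 → z.re < 0) ↔ 0 < a₀ :=
  ⟨pos_of_cubic_roots_re_neg, fun ha₀ _ => cubic_roots_re_neg ha₂ ha₀ hurwitz⟩

theorem cubic_stable_iff_R0_lt_one_general
    (σ γ β N α ρ : ℝ) (hσ : 0 < σ) (hγ : 0 < γ) (hβ : 0 < β) (hN : 0 < N)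
    (hα : 0 ≤ α) (hρ1 : ρ < 1)
    (R₀ a₂ a₁ a₀ : ℝ)
    (hR₀ : R₀ = (1 / γ) * (β * (1 - ρ) - α / N))
    (ha₂ : a₂ = σ + 2 * γ + α / N)
    (ha₁ : a₁ = (σ + γ) * (α / N + γ) + σ * γ)
    (ha₀ : a₀ = σ * γ * (α / N + γ - β * (1 - ρ))) :
    (∀ z : ℂ, z ^ 3 + (a₂ : ℂ) * z ^ 2 + (a₁ : ℂ) * z + (a₀ : ℂ) = 0 → z.re < 0) ↔
      R₀ < 1 := by
  have hg : 0 ≤ α / N := div_nonneg hα hN.le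
  have hk : 0 ≤ β * (1 - ρ) := mul_nonneg hβ.le (by linarith)
  generalize α / N = g at *
  generalize β * (1 - ρ) = k at *
  have ha₁_pos : 0 < a₁ := by rw [ha₁]; positivity
  have hurwitz : a₀ < a₂ * a₁ := by
    have : a₂ * a₁ - a₀ = σ ^ 2 * (g + γ) + σ ^ 2 * γ + (2 * γ + g) * a₁ + σ * γ * k := by
      rw [ha₂, ha₁, ha₀]; ring
    linarith [show 0 < σ ^ 2 * (g + γ) + σ ^ 2 * γ + (2 * γ + g) * a₁ + σ * γ * k by positivity]
  have ha₀_eq : a₀ = σ * γ ^ 2 * (1 - R₀) := by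
    rw [ha₀, hR₀]; field_simp; ring
  rw [cubic_roots_re_neg_iff (by rw [ha₂]; positivity) hurwitz, ha₀_eq,
    mul_pos_iff_of_pos_left (by positivity), sub_pos]

theorem cubic_stable_iff_R0_lt_one
    (σ γ β N α ρ : ℝ) (hσ : 0 < σ) (hγ : 0 < γ) (hβ : 0 < β) (hN : 0 < N)
    (hα : 0 ≤ α) (hρ0 : 0 ≤ ρ) (hρ1 : ρ < 1)
    (R₀ a₂ a₁ a₀ : ℝ)
    (hR₀ : R₀ = (1 / γ) * (β * (1 - ρ) - α / N))
    (ha₂ : a₂ = σ + 2 * γ + α / N)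
    (ha₁ : a₁ = (σ + γ) * (α / N + γ) + σ * γ)
    (ha₀ : a₀ = σ * γ * (α / N + γ - β * (1 - ρ))) :
    (∀ z : ℂ, z ^ 3 + (a₂ : ℂ) * z ^ 2 + (a₁ : ℂ) * z + (a₀ : ℂ) = 0 → z.re < 0) ↔
      R₀ < 1 :=
  cubic_stable_iff_R0_lt_one_general σ γ β N α ρ hσ hγ hβ hN hα hρ1 R₀ a₂ a₁ a₀ hR₀ ha₂ ha₁ ha₀
end
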